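/- arXiv:1103.4374 — 3 statements merged into one kernel-verified Lean document; each statement's English description precedes it below -/
import Mathlib

section
/- Let R be a commutative ring, σ_i, σ_j, σ_k pairwise commuting automorphisms of R, and t_j a unit of R. Define τ = σ_j(t_j) · (σ_i(σ_j(t_j)))⁻¹. Then the relation t_j · σ_i(σ_k(t_j)) = σ_i(t_j) · σ_k(t_j) holds if and only if σ_k(σ_j⁻¹(τ)) = σ_j⁻¹(τ), i.e., σ_k fixes the element t_j · (σ_i(t_j))⁻¹. -/
theorem RingEquiv.map_ringInverse {R S : Type*} [Semiring R] [Semiring S] (f : R ≃+* S) (x : R) :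
    f (Ring.inverse x) = Ring.inverse (f x) := by
  by_cases hx : IsUnit x
  · obtain ⟨u, rfl⟩ := hx
    simpa using (Ring.inverse_unit (Units.map (f : R →* S) u)).symm
  · rw [Ring.inverse_non_unit x hx, Ring.inverse_non_unit (f x) (by rwa [isUnit_map_iff]), map_zero]

theorem Ring.mul_inverse_eq_mul_inverse_iff {M : Type*} [CommMonoidWithZero M] {a b c d : M}
    (hb : IsUnit b) (hd : IsUnit d) :
    a * Ring.inverse b = c * Ring.inverse d ↔ a * d = c * b := by
  obtain ⟨u, rfl⟩ := hb
  obtain ⟨v, rfl⟩ := hd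
  rw [Ring.inverse_unit, Ring.inverse_unit, Units.mul_inv_eq_iff_eq_mul, mul_right_comm,
    eq_comm, Units.mul_inv_eq_iff_eq_mul, eq_comm]

theorem RingEquiv.apply_mul_ringInverse_eq_self_iff {R : Type*} [CommRing R] (σ : R ≃+* R)
    (a : R) {b : R} (hb : IsUnit b) :
    σ (a * Ring.inverse b) = a * Ring.inverse b ↔ σ a * b = a * σ b := by
  rw [map_mul, σ.map_ringInverse, Ring.mul_inverse_eq_mul_inverse_iff (hb.map σ) hb]

theorem stmt1_general {R : Type*} [CommRing R] (σi σj σk : R ≃+* R)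
    (hij : ∀ r : R, σi (σj r) = σj (σi r))
    (hik : ∀ r : R, σi (σk r) = σk (σi r))
    (tj : Rˣ) :
    (((tj : R) * σi (σk (tj : R)) = σi (tj : R) * σk (tj : R)) ↔
      σk (σj.symm (σj (tj : R) * Ring.inverse (σi (σj (tj : R))))) =
        σj.symm (σj (tj : R) * Ring.inverse (σi (σj (tj : R))))) ∧
    (((tj : R) * σi (σk (tj : R)) = σi (tj : R) * σk (tj : R)) ↔
      σk ((tj : R) * Ring.inverse (σi (tj : R))) =
        (tj : R) * Ring.inverse (σi (tj : R))) := by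
  have ratio_fixed_iff : ((tj : R) * σi (σk (tj : R)) = σi (tj : R) * σk (tj : R)) ↔
      σk ((tj : R) * Ring.inverse (σi (tj : R))) = (tj : R) * Ring.inverse (σi (tj : R)) := by
    rw [σk.apply_mul_ringInverse_eq_self_iff _ (tj.isUnit.map σi), ← hik, eq_comm, mul_comm]
  have untwist : σj.symm (σj (tj : R) * Ring.inverse (σi (σj (tj : R)))) =
      (tj : R) * Ring.inverse (σi (tj : R)) := by
    rw [hij, ← σj.map_ringInverse, ← map_mul, RingEquiv.symm_apply_apply]
  exact ⟨untwist ▸ ratio_fixed_iff, ratio_fixed_iff⟩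

/-- The second TGWA consistency relation `tⱼ σᵢσₖ(tⱼ) = σᵢ(tⱼ)σₖ(tⱼ)` holds iff
`σₖ` fixes `σⱼ⁻¹(τ)` where `τ = σⱼ(tⱼ)·(σᵢσⱼ(tⱼ))⁻¹`, i.e. iff `σₖ` fixes
`tⱼ·(σᵢ(tⱼ))⁻¹`. -/
theorem stmt1 {R : Type*} [CommRing R] (σi σj σk : R ≃+* R)
    (hij : ∀ r : R, σi (σj r) = σj (σi r))
    (hik : ∀ r : R, σi (σk r) = σk (σi r))
    (hjk : ∀ r : R, σj (σk r) = σk (σj r))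
    (tj : Rˣ) :
    (((tj : R) * σi (σk (tj : R)) = σi (tj : R) * σk (tj : R)) ↔
      σk (σj.symm (σj (tj : R) * Ring.inverse (σi (σj (tj : R))))) =
        σj.symm (σj (tj : R) * Ring.inverse (σi (σj (tj : R))))) ∧
    (((tj : R) * σi (σk (tj : R)) = σi (tj : R) * σk (tj : R)) ↔
      σk ((tj : R) * Ring.inverse (σi (tj : R))) =
        (tj : R) * Ring.inverse (σi (tj : R))) :=
  stmt1_general σi σj σk hij hik tj
end

section
/- With R and σ₁, σ₂, σ₃ as in the Laurent polynomial example, for any i, j, k with {i,j,k} = {1,2,3}, the element σ_i(t_j)σ_k(t_j) − σ_i(σ_k(t_j))·t_j equals 2 α_{ij} α_{kj} t_j², in particular it is a unit of R (so the second consistency relation fails with an invertible discrepancy). -/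
noncomputable section

/-- The Laurent polynomial algebra `ℂ[α₁₂^{±1}, α₂₃^{±1}, α₁₃^{±1}, t₁^{±1}, t₂^{±1}, t₃^{±1}]`
realized as the group algebra of `ℤ⁶` over `ℂ`. -/
abbrev LR : Type := AddMonoidAlgebra ℂ (Fin 6 → ℤ)

/-- The group of monomial units of `LR`. -/
def genLR : Multiplicative (Fin 6 → ℤ) →* LRˣ :=
  (AddMonoidAlgebra.of ℂ (Fin 6 → ℤ)).toHomUnits

/-- index of the variable `α_{ij}` (for `i < j`): `α₀₁ ↦ 0`, `α₀₂ ↦ 1`, `α₁₂ ↦ 2`. -/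
def pairIdx (i j : Fin 3) : Fin 6 :=
  ⟨i.val + j.val - 1, by have := i.isLt; have := j.isLt; omega⟩

/-- exponent vector of `α_{ij}`, with `α_{ji} = α_{ij}⁻¹` and `α_{ii} = 1`. -/
def aexp (i j : Fin 3) : Fin 6 → ℤ :=
  if i = j then 0
  else if i < j then Pi.single (pairIdx i j) 1
  else -(Pi.single (pairIdx j i) 1)

/-- the unit `α_{ij} ∈ LRˣ`. -/
def αU (i j : Fin 3) : LRˣ := genLR (Multiplicative.ofAdd (aexp i j))

/-- the unit `t_j ∈ LRˣ`. -/
def tU (j : Fin 3) : LRˣ :=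
  genLR (Multiplicative.ofAdd
    (Pi.single (⟨j.val + 3, by have := j.isLt; omega⟩ : Fin 6) 1))

/-! Since `{j, k}` is the pair opposite to `i`, the automorphism `σᵢ` flips the sign of `α_{kj}`, so
`σᵢσₖ(tⱼ) = σᵢ(α_{kj}) σᵢ(tⱼ) = -α_{kj} α_{ij} tⱼ` and the two terms of the discrepancy add up
instead of cancelling: it is `2` times a monomial, a unit because `2` is invertible in `ℂ`. -/

theorem aexp_swap (j k : Fin 3) : aexp k j = -aexp j k := by
  rcases lt_trichotomy j k with h | rfl | h
  · simp [aexp, h.ne, h.ne', h.not_gt, h]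
  · simp [aexp]
  · simp [aexp, h.ne, h.ne', h.not_gt, h]

theorem αU_swap (j k : Fin 3) : αU k j = (αU j k)⁻¹ := by
  rw [αU, αU, aexp_swap, ofAdd_neg, map_inv]

theorem map_units_inv_of_map_eq_neg {R F : Type*} [Ring R] [FunLike F R R]
    [MonoidHomClass F R R] (f : F) (u : Rˣ) (h : f u = -u) : f ↑u⁻¹ = -↑u⁻¹ := by
  have hu : Units.map (f : R →* R) u = -u := Units.ext h
  rw [← MonoidHom.coe_coe f, ← Units.coe_map_inv, hu, inv_neg, Units.val_neg]

theorem isUnit_ofNat_of_charZero (K : Type*) {A : Type*} [Field K] [CharZero K] [Semiring A]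
    [Algebra K A] (n : ℕ) [n.AtLeastTwo] : IsUnit (OfNat.ofNat n : A) := by
  simpa only [map_ofNat] using
    (IsUnit.mk0 (OfNat.ofNat n : K) (NeZero.ne _)).map (algebraMap K A)

theorem map_αU_eq_neg (σ : Fin 3 → (LR ≃ₐ[ℂ] LR))
    (hα : ∀ i j k : Fin 3, j < k →
      σ i (αU j k : LR) =
        if i ≠ j ∧ i ≠ k then -(αU j k : LR) else (αU j k : LR))
    {i j k : Fin 3} (hij : i ≠ j) (hjk : j ≠ k) (hik : i ≠ k) :
    σ i (αU j k : LR) = -(αU j k : LR) := by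
  rcases hjk.lt_or_gt with h | h
  · rw [hα i j k h, if_pos ⟨hij, hik⟩]
  · rw [αU_swap]
    exact map_units_inv_of_map_eq_neg (σ i) _ (by rw [hα i k j h, if_pos ⟨hik, hij⟩])

/-- For `{i,j,k} = {1,2,3}`, in the Laurent polynomial example one has
`σᵢ(tⱼ)σₖ(tⱼ) − σᵢσₖ(tⱼ)·tⱼ = 2 α_{ij} α_{kj} tⱼ²`, which is a unit of `R`. -/
theorem stmt4 (σ : Fin 3 → (LR ≃ₐ[ℂ] LR))
    (hα : ∀ i j k : Fin 3, j < k →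
      σ i (αU j k : LR) =
        if i ≠ j ∧ i ≠ k then -(αU j k : LR) else (αU j k : LR))
    (ht : ∀ i j : Fin 3, σ i (tU j : LR) = (αU i j : LR) * (tU j : LR)) :
    ∀ i j k : Fin 3, i ≠ j → j ≠ k → i ≠ k →
      σ i (tU j : LR) * σ k (tU j : LR) - σ i (σ k (tU j : LR)) * (tU j : LR)
        = 2 * (αU i j : LR) * (αU k j : LR) * (tU j : LR) ^ 2 ∧
      IsUnit (σ i (tU j : LR) * σ k (tU j : LR)
        - σ i (σ k (tU j : LR)) * (tU j : LR)) := by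
  intro i j k hij hjk hik
  have hdiff : σ i (tU j : LR) * σ k (tU j : LR) - σ i (σ k (tU j : LR)) * (tU j : LR)
      = 2 * (αU i j : LR) * (αU k j : LR) * (tU j : LR) ^ 2 := by
    rw [ht k j, map_mul, map_αU_eq_neg σ hα hik hjk.symm hij, ht i j]
    ring
  refine ⟨hdiff, hdiff ▸ ?_⟩
  exact (((isUnit_ofNat_of_charZero ℂ 2).mul (αU i j).isUnit).mul (αU k j).isUnit).mul
    ((tU j).isUnit.pow 2)
end
end

section
/- Let R be a ring, σ an automorphism of R, and suppose t ∈ Z(R) is regular in R. Let A be a ring receiving a ring homomorphism ρ : R → A together with elements X, Y ∈ A satisfying Xρ(r) = ρ(σ(r))X and Yρ(r) = ρ(σ⁻¹(r))Y for all r ∈ R, YX = ρ(t), XY = ρ(σ(t)), and such that ρ(t) is regular in ρ(R). If c ∈ A is such that both Yc and cY lie in ρ(R), then Yc = ρ(σ⁻¹(s)) where cY = ρ(s). -/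
/-- The degree-one case of the regular shift lemma: if `X, Y` satisfy the generalized
Weyl relations over `ρ : R → A`, `t` is a regular central element with `ρ(t)` regular
in `ρ(R)`, and both `Yc` and `cY` lie in `ρ(R)` with `cY = ρ(s)`, then
`Yc = ρ(σ⁻¹(s))`. -/
theorem stmt13 {R A : Type*} [Ring R] [Ring A] (σ : R ≃+* R) (t : R)
    (htc : t ∈ Set.center R)
    (htreg : ∀ r : R, t * r = 0 → r = 0)
    (htreg' : ∀ r : R, r * t = 0 → r = 0)
    (ρ : R →+* A) (X Y : A)
    (hX : ∀ r : R, X * ρ r = ρ (σ r) * X)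
    (hY : ∀ r : R, Y * ρ r = ρ (σ.symm r) * Y)
    (hYX : Y * X = ρ t) (hXY : X * Y = ρ (σ t))
    (hρtreg : ∀ r : R, ρ r * ρ t = 0 → ρ r = 0)
    (hρtreg' : ∀ r : R, ρ t * ρ r = 0 → ρ r = 0)
    (c : A) (s : R)
    (hYc : ∃ r : R, Y * c = ρ r) (hcY : c * Y = ρ s) :
    Y * c = ρ (σ.symm s) := by
  obtain ⟨r, hr⟩ := hYc
  have key : ρ r * Y = ρ (σ.symm s) * Y := by
    calc ρ r * Y = Y * c * Y := by rw [hr]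
    _ = Y * ρ s := by rw [mul_assoc, hcY]
    _ = ρ (σ.symm s) * Y := hY s
  have h2 : (ρ r - ρ (σ.symm s)) * ρ t = 0 := by
    rw [← hYX, ← mul_assoc, sub_mul, key, sub_self, zero_mul]
  have h3 : ρ (r - σ.symm s) = 0 := by
    apply hρtreg
    rwa [map_sub]
  rw [hr, ← sub_eq_zero, ← map_sub]
  exact h3
end
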